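/- If A ∈ ℝ^{n×n} is a symmetric circulant matrix with first column a and Λ = √n·Diag(Ȟ_c·a), then Ȟ⁺·A·Ȟ⁻ = Ȟ⁻·A·Ȟ⁺ = Λ·F̌² = F̌²·Λ (identifying real matrices with their complex counterparts). -/

import Mathlib

open Matrix Real

/-- The node-centered cosine matrix `(Ȟ_c)_{j,k} = n^{−1/2}·cos(2jkπ/n)`. -/
noncomputable def Hc (n : ℕ) : Matrix (Fin n) (Fin n) ℝ :=
  fun j k => Real.cos (2 * (j.val : ℝ) * (k.val : ℝ) * Real.pi / n) / Real.sqrt n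

/-- The node-centered sine matrix `(Ȟ_s)_{j,k} = n^{−1/2}·sin(2jkπ/n)`. -/
noncomputable def Hs (n : ℕ) : Matrix (Fin n) (Fin n) ℝ :=
  fun j k => Real.sin (2 * (j.val : ℝ) * (k.val : ℝ) * Real.pi / n) / Real.sqrt n

/-- The node-centered Hartley matrix `Ȟ⁺ = Ȟ_c + Ȟ_s`. -/
noncomputable def Hp (n : ℕ) : Matrix (Fin n) (Fin n) ℝ := Hc n + Hs n

/-- The node-centered Hartley matrix `Ȟ⁻ = Ȟ_c − Ȟ_s`. -/
noncomputable def Hm (n : ℕ) : Matrix (Fin n) (Fin n) ℝ := Hc n - Hs n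

/-- The node-centered Fourier matrix `F̌ = Ȟ_c + i·Ȟ_s ∈ ℂ^{n×n}`. -/
noncomputable def fourierM (n : ℕ) : Matrix (Fin n) (Fin n) ℂ :=
  (Hc n).map Complex.ofReal + Complex.I • (Hs n).map Complex.ofReal

/-!
The normalized character matrix `F = (ψ (j * k) / √n)` of the standard character `ψ` of `Fin n`,
and its conjugate `F̄`, diagonalize every circulant matrix `A` with even first column `a`:
`A F = F Λ` and `A F̄ = F̄ Λ` with `Λ = √n · diag (F a)`, and `F a = F̄ a = Ȟ_c a` by evenness.
Orthogonality of characters gives `F F̄ = F̄ F = 1` and `F² = F̄² = J`, the permutation matrix of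
`j ↦ -j`. Since `Ȟ⁺ = ((1 - i) F + (1 + i) F̄) / 2` and `Ȟ⁻ = ((1 + i) F + (1 - i) F̄) / 2`,
expanding `Ȟ⁺ A Ȟ⁻` leaves `J Λ`: the terms `F F̄ Λ` and `F̄ F Λ` cancel because
`((1 - i) / 2)² + ((1 + i) / 2)² = 0`. Finally `Λ` commutes with `J = F²` because it is even.
-/

open Complex

def reflectionMatrix (R α : Type*) [AddGroup R] [DecidableEq R] [Zero α] [One α] :
    Matrix R R α :=
  of fun j k => if j + k = 0 then 1 else 0

lemma diagonal_mul_reflectionMatrix {R α : Type*} [AddGroup R] [Fintype R] [DecidableEq R]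
    [Semiring α] {d : R → α} (hd : ∀ k, d (-k) = d k) :
    diagonal d * reflectionMatrix R α = reflectionMatrix R α * diagonal d := by
  ext j k
  rw [diagonal_mul, mul_diagonal, reflectionMatrix, of_apply]
  split_ifs with h
  · rw [eq_neg_of_add_eq_zero_left h, hd, mul_one, one_mul]
  · rw [mul_zero, zero_mul]

lemma smul_add_smul_mul_mul_smul_add_smul {K S : Type*} [CommRing K] [Ring S] [Algebra K S]
    {F G A L J : S} (hFG : F * G = 1) (hGF : G * F = 1) (hFF : F * F = J) (hGG : G * G = J)
    (hAF : A * F = F * L) (hAG : A * G = G * L) (c₁ c₂ : K) :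
    (c₁ • F + c₂ • G) * A * (c₂ • F + c₁ • G) =
      (2 * c₁ * c₂) • (J * L) + (c₁ ^ 2 + c₂ ^ 2) • L := by
  rw [mul_assoc, mul_add, mul_smul_comm, mul_smul_comm, hAF, hAG]
  simp only [add_mul, mul_add, smul_mul_assoc, mul_smul_comm, ← mul_assoc, hFF, hGG, hFG, hGF,
    one_mul]
  module

section DFTMatrix

variable {R : Type*} [Fintype R]

lemma sqrt_card_mul_self :
    (Real.sqrt (Fintype.card R) : ℂ) * Real.sqrt (Fintype.card R) = Fintype.card R := by
  exact_mod_cast Real.mul_self_sqrt (Nat.cast_nonneg _)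

variable [CommRing R]

lemma sqrt_card_ne_zero : (Real.sqrt (Fintype.card R) : ℂ) ≠ 0 := by
  have : (0 : ℝ) < Fintype.card R := by exact_mod_cast Fintype.card_pos
  exact_mod_cast (Real.sqrt_pos.2 this).ne'

noncomputable def dftMatrix (ψ : AddChar R ℂ) : Matrix R R ℂ :=
  of fun j k => ψ (j * k) / (Real.sqrt (Fintype.card R) : ℂ)

lemma dftMatrix_mulShift_mul_dftMatrix_mulShift [DecidableEq R] {ψ : AddChar R ℂ}
    (hψ : ψ.IsPrimitive) (u v : R) :
    dftMatrix (ψ.mulShift u) * dftMatrix (ψ.mulShift v) =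
      of fun j k => if u * j + v * k = 0 then 1 else 0 := by
  ext j k
  have hsum :
      ∑ m : R, ψ (u * (j * m)) * ψ (v * (m * k)) = ∑ m : R, ψ (m * (u * j + v * k)) :=
    Fintype.sum_congr _ _ fun m => by rw [← AddChar.map_add_eq_mul]; ring_nf
  simp only [mul_apply, dftMatrix, of_apply, AddChar.mulShift_apply, div_mul_div_comm,
    ← Finset.sum_div, hsum, AddChar.sum_mulShift _ hψ, sqrt_card_mul_self]
  split_ifs <;> simp

section Primitive

variable [DecidableEq R] {ψ : AddChar R ℂ}

lemma dftMatrix_mul_dftMatrix_inv (hψ : ψ.IsPrimitive) : dftMatrix ψ * dftMatrix ψ⁻¹ = 1 := by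
  have h := dftMatrix_mulShift_mul_dftMatrix_mulShift hψ 1 (-1)
  rw [ψ.mulShift_one, ← AddChar.inv_mulShift] at h
  ext j k
  simp [h, one_apply, ← sub_eq_add_neg, sub_eq_zero]

lemma dftMatrix_inv_mul_dftMatrix (hψ : ψ.IsPrimitive) : dftMatrix ψ⁻¹ * dftMatrix ψ = 1 := by
  have h := dftMatrix_mulShift_mul_dftMatrix_mulShift hψ (-1) 1
  rw [ψ.mulShift_one, ← AddChar.inv_mulShift] at h
  ext j k
  simp [h, one_apply, neg_add_eq_sub, sub_eq_zero, eq_comm]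

lemma dftMatrix_mul_self (hψ : ψ.IsPrimitive) :
    dftMatrix ψ * dftMatrix ψ = reflectionMatrix R ℂ := by
  simpa [reflectionMatrix] using dftMatrix_mulShift_mul_dftMatrix_mulShift hψ 1 1

lemma dftMatrix_inv_mul_self (hψ : ψ.IsPrimitive) :
    dftMatrix ψ⁻¹ * dftMatrix ψ⁻¹ = reflectionMatrix R ℂ := by
  rw [AddChar.inv_mulShift, dftMatrix_mulShift_mul_dftMatrix_mulShift hψ]
  ext j k
  simp only [of_apply, reflectionMatrix, neg_one_mul, ← neg_add, neg_eq_zero]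

end Primitive

variable {a : R → ℂ}

lemma circulant_mul_dftMatrix [DecidableEq R] (ha : ∀ i, a (-i) = a i) (φ : AddChar R ℂ) :
    circulant a * dftMatrix φ =
      dftMatrix φ * diagonal ((Real.sqrt (Fintype.card R) : ℂ) • (dftMatrix φ *ᵥ a)) := by
  ext j k
  have hshift : ∑ m, circulant a j m * dftMatrix φ m k
      = ∑ r, a r * (φ ((j + r) * k) / (Real.sqrt (Fintype.card R) : ℂ)) :=
    (Fintype.sum_equiv (Equiv.addLeft j) _ _ fun r => by simp [dftMatrix, ha]).symm
  rw [mul_diagonal, mul_apply, hshift]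
  simp only [dftMatrix, of_apply, add_mul, AddChar.map_add_eq_mul, Pi.smul_apply, mulVec,
    dotProduct, smul_eq_mul, Finset.mul_sum]
  refine Fintype.sum_congr _ _ fun r => ?_
  field_simp [sqrt_card_ne_zero]
  rw [mul_comm r k]

lemma dftMatrix_inv_mulVec (ha : ∀ i, a (-i) = a i) (ψ : AddChar R ℂ) :
    dftMatrix ψ⁻¹ *ᵥ a = dftMatrix ψ *ᵥ a := by
  ext k
  simp only [mulVec, dotProduct, dftMatrix, of_apply, AddChar.inv_apply]
  exact Fintype.sum_equiv (Equiv.neg R) _ _ fun r => by simp [ha]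

lemma dftMatrix_mulVec_neg (ha : ∀ i, a (-i) = a i) (ψ : AddChar R ℂ) (k : R) :
    (dftMatrix ψ *ᵥ a) (-k) = (dftMatrix ψ *ᵥ a) k := by
  conv_rhs => rw [← dftMatrix_inv_mulVec ha]
  simp [mulVec, dotProduct, dftMatrix]

lemma smul_add_smul_dftMatrix_mul_circulant_mul [DecidableEq R] {ψ : AddChar R ℂ}
    (hψ : ψ.IsPrimitive) (ha : ∀ i, a (-i) = a i) (c₁ c₂ : ℂ) :
    (c₁ • dftMatrix ψ + c₂ • dftMatrix ψ⁻¹) * circulant a *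
        (c₂ • dftMatrix ψ + c₁ • dftMatrix ψ⁻¹) =
      (2 * c₁ * c₂) • (reflectionMatrix R ℂ *
          diagonal ((Real.sqrt (Fintype.card R) : ℂ) • (dftMatrix ψ *ᵥ a))) +
        (c₁ ^ 2 + c₂ ^ 2) •
          diagonal ((Real.sqrt (Fintype.card R) : ℂ) • (dftMatrix ψ *ᵥ a)) := by
  have hAG := circulant_mul_dftMatrix ha ψ⁻¹
  rw [dftMatrix_inv_mulVec ha] at hAG
  exact smul_add_smul_mul_mul_smul_add_smul (dftMatrix_mul_dftMatrix_inv hψ)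
    (dftMatrix_inv_mul_dftMatrix hψ) (dftMatrix_mul_self hψ) (dftMatrix_inv_mul_self hψ)
    (circulant_mul_dftMatrix ha ψ) hAG c₁ c₂

end DFTMatrix

section NodeFourier

variable {n : ℕ} [NeZero n]

namespace Fin

def powAddChar {M : Type*} [CommMonoid M] {ζ : M} (hζ : ζ ^ n = 1) : AddChar (Fin n) M where
  toFun j := ζ ^ j.val
  map_zero_eq_one' := by simp
  map_add_eq_mul' j k := by rw [Fin.val_add, ← pow_eq_pow_mod _ hζ, pow_add]

lemma powAddChar_mul {M : Type*} [CommMonoid M] {ζ : M} (hζ : ζ ^ n = 1) (j k : Fin n) :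
    powAddChar hζ (j * k) = ζ ^ (j.val * k.val) := by
  simp only [powAddChar, AddChar.coe_mk, Fin.val_mul, ← pow_eq_pow_mod _ hζ]

open Fin.CommRing

lemma powAddChar_isPrimitive {M : Type*} [CommMonoid M] {ζ : M} (hζ : IsPrimitiveRoot ζ n) :
    (powAddChar hζ.pow_eq_one).IsPrimitive := by
  intro a ha h
  have hζa := DFunLike.congr_fun h 1
  rw [AddChar.mulShift_apply, mul_one, AddChar.one_apply] at hζa
  exact hζ.pow_ne_one_of_pos_of_lt (Fin.val_ne_zero_iff.2 ha) a.isLt hζa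

variable (n)

noncomputable def stdAddChar : AddChar (Fin n) ℂ :=
  powAddChar (Complex.isPrimitiveRoot_exp n (NeZero.ne n)).pow_eq_one

lemma stdAddChar_isPrimitive : (stdAddChar n).IsPrimitive :=
  powAddChar_isPrimitive (Complex.isPrimitiveRoot_exp n (NeZero.ne n))

variable {n}

lemma stdAddChar_mul (j k : Fin n) :
    stdAddChar n (j * k) = exp ((2 * j.val * k.val * π / n : ℝ) * I) := by
  rw [stdAddChar, powAddChar_mul, ← Complex.exp_nat_mul]
  push_cast
  ring_nf

end Fin

-- The ring structure on `Fin n` is scoped; the final statement is elaborated without it.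
open Fin.CommRing

variable (n)

lemma fourierM_eq_dftMatrix : fourierM n = dftMatrix (Fin.stdAddChar n) := by
  ext j k
  simp only [fourierM, Hc, Hs, dftMatrix, Matrix.add_apply, Matrix.smul_apply, Matrix.map_apply,
    of_apply, smul_eq_mul, Fin.stdAddChar_mul, Complex.exp_mul_I, Fintype.card_fin]
  push_cast
  ring

lemma dftMatrix_stdAddChar_inv :
    dftMatrix (Fin.stdAddChar n)⁻¹ = (Hc n).map ofReal - I • (Hs n).map ofReal := by
  ext j k
  simp only [Hc, Hs, dftMatrix, Matrix.sub_apply, Matrix.smul_apply, Matrix.map_apply, of_apply,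
    smul_eq_mul, AddChar.inv_apply', Fin.stdAddChar_mul, Fintype.card_fin]
  rw [← Complex.exp_neg, ← neg_mul, Complex.exp_mul_I, Complex.cos_neg, Complex.sin_neg]
  push_cast
  ring

lemma Hp_map_ofReal : (Hp n).map ofReal =
    ((1 - I) / 2) • dftMatrix (Fin.stdAddChar n) +
      ((1 + I) / 2) • dftMatrix (Fin.stdAddChar n)⁻¹ := by
  rw [← fourierM_eq_dftMatrix, dftMatrix_stdAddChar_inv, fourierM, Hp,
    Matrix.map_add _ ofReal_add]
  match_scalars
  · ring
  · linear_combination I_sq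

lemma Hm_map_ofReal : (Hm n).map ofReal =
    ((1 + I) / 2) • dftMatrix (Fin.stdAddChar n) +
      ((1 - I) / 2) • dftMatrix (Fin.stdAddChar n)⁻¹ := by
  rw [← fourierM_eq_dftMatrix, dftMatrix_stdAddChar_inv, fourierM, Hm,
    Matrix.map_sub _ ofReal_sub]
  match_scalars
  · ring
  · linear_combination -I_sq

variable {n}

lemma Hp_mul_circulant_mul_Hm {a : Fin n → ℂ} (ha : ∀ i, a (-i) = a i) :
    (Hp n).map ofReal * circulant a * (Hm n).map ofReal =
      reflectionMatrix (Fin n) ℂ * diagonal ((Real.sqrt n : ℂ) • (fourierM n *ᵥ a)) := by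
  have h₁ : 2 * ((1 - I) / 2) * ((1 + I) / 2) = 1 := by linear_combination (-1 / 2 : ℂ) * I_sq
  have h₂ : ((1 - I) / 2) ^ 2 + ((1 + I) / 2) ^ 2 = 0 := by
    linear_combination (1 / 2 : ℂ) * I_sq
  rw [Hp_map_ofReal, Hm_map_ofReal,
    smul_add_smul_dftMatrix_mul_circulant_mul (Fin.stdAddChar_isPrimitive n) ha, h₁, h₂,
    one_smul, zero_smul, add_zero, ← fourierM_eq_dftMatrix, Fintype.card_fin]

lemma Hm_mul_circulant_mul_Hp {a : Fin n → ℂ} (ha : ∀ i, a (-i) = a i) :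
    (Hm n).map ofReal * circulant a * (Hp n).map ofReal =
      reflectionMatrix (Fin n) ℂ * diagonal ((Real.sqrt n : ℂ) • (fourierM n *ᵥ a)) := by
  have h₁ : 2 * ((1 + I) / 2) * ((1 - I) / 2) = 1 := by linear_combination (-1 / 2 : ℂ) * I_sq
  have h₂ : ((1 + I) / 2) ^ 2 + ((1 - I) / 2) ^ 2 = 0 := by
    linear_combination (1 / 2 : ℂ) * I_sq
  rw [Hp_map_ofReal, Hm_map_ofReal,
    smul_add_smul_dftMatrix_mul_circulant_mul (Fin.stdAddChar_isPrimitive n) ha, h₁, h₂,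
    one_smul, zero_smul, add_zero, ← fourierM_eq_dftMatrix, Fintype.card_fin]

variable (n)

lemma fourierM_sq : fourierM n ^ 2 = reflectionMatrix (Fin n) ℂ := by
  rw [sq, fourierM_eq_dftMatrix, dftMatrix_mul_self (Fin.stdAddChar_isPrimitive n)]

variable {n}

lemma fourierM_mulVec_neg {a : Fin n → ℂ} (ha : ∀ i, a (-i) = a i) (k : Fin n) :
    (fourierM n *ᵥ a) (-k) = (fourierM n *ᵥ a) k := by
  rw [fourierM_eq_dftMatrix]
  exact dftMatrix_mulVec_neg ha _ k

lemma map_smul_diagonal_Hc_mulVec {a : Fin n → ℝ} (ha : ∀ i, a (-i) = a i) :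
    (Real.sqrt n • diagonal (Hc n *ᵥ a)).map ofReal =
      diagonal ((Real.sqrt n : ℂ) • (fourierM n *ᵥ fun i => (a i : ℂ))) := by
  have ha' : ∀ i, (a (-i) : ℂ) = a i := fun i => congrArg ofReal (ha i)
  have hC :
      (Hc n).map ofReal = (2 : ℂ)⁻¹ • (fourierM n + dftMatrix (Fin.stdAddChar n)⁻¹) := by
    rw [dftMatrix_stdAddChar_inv, fourierM]
    module
  have hv : (Hc n).map ofReal *ᵥ (fun i => (a i : ℂ)) = fourierM n *ᵥ fun i => (a i : ℂ) := by
    rw [hC, smul_mulVec, add_mulVec, dftMatrix_inv_mulVec ha', ← fourierM_eq_dftMatrix]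
    module
  rw [← hv]
  ext j k
  by_cases h : j = k <;> simp [h, mulVec, dotProduct]

end NodeFourier

/-- For a symmetric circulant `A` with first column `a` and
`Λ = √n·Diag(Ȟ_c·a)`: `Ȟ⁺·A·Ȟ⁻ = Ȟ⁻·A·Ȟ⁺ = Λ·F̌² = F̌²·Λ` (identifying
real matrices with their complex counterparts). -/
theorem symm_circulant_mixed_node_hartley (n : ℕ) [NeZero n] (a : Fin n → ℝ)
    (A : Matrix (Fin n) (Fin n) ℝ)
    (hA : ∀ j k : Fin n, A j k = a (j - k))
    (ha : ∀ i : Fin n, a (-i) = a i) :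
    (Hp n * A * Hm n).map Complex.ofReal =
      (Real.sqrt n • Matrix.diagonal ((Hc n).mulVec a)).map Complex.ofReal *
        fourierM n ^ 2 ∧
    (Hm n * A * Hp n).map Complex.ofReal =
      (Real.sqrt n • Matrix.diagonal ((Hc n).mulVec a)).map Complex.ofReal *
        fourierM n ^ 2 ∧
    (Real.sqrt n • Matrix.diagonal ((Hc n).mulVec a)).map Complex.ofReal *
        fourierM n ^ 2 =
      fourierM n ^ 2 *
        (Real.sqrt n • Matrix.diagonal ((Hc n).mulVec a)).map Complex.ofReal := by
  have ha' : ∀ i, (a (-i) : ℂ) = a i := fun i => congrArg ofReal (ha i)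
  have hA' : A.map ofReal = circulant fun i => (a i : ℂ) := by
    ext j k
    simp [hA]
  have hcomm := diagonal_mul_reflectionMatrix
    (d := (Real.sqrt n : ℂ) • (fourierM n *ᵥ fun i => (a i : ℂ))) fun k => by
      rw [Pi.smul_apply, Pi.smul_apply, fourierM_mulVec_neg ha']
  have hmap (X Y : Matrix (Fin n) (Fin n) ℝ) : (X * Y).map ofReal = X.map ofReal * Y.map ofReal :=
    Matrix.map_mul (f := ofRealHom)
  rw [map_smul_diagonal_Hc_mulVec ha, fourierM_sq, hmap, hmap, hmap, hmap, hA', hcomm,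
    Hp_mul_circulant_mul_Hm ha', Hm_mul_circulant_mul_Hp ha']
  exact ⟨rfl, rfl, rfl⟩
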